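/- Let N ≥ 6 and p ∈ (N/(N-2), (N+2)/(N-2)] with q determined by 1/(p+1) + 1/(q+1) = (N-2)/N. Define σ₁(p) := pN - N(q+1)/(N-2) - N/(q+1). Then σ₁ is increasing in p; moreover, for N = 6, σ₁(3/2) > 0, so σ₁(p) > 0 for all p ∈ (3/2, 2]. -/

import Mathlib

/-!
Writing `Q(x) = (N - 2) x - 2`, so that `N - 2 - N/(x + 1) = Q(x)/(x + 1)`, the difference
`σ₁(b) - σ₁(a)` factors as `(b - a)` times
`N - N/((a + 1)(b + 1)) + N³/((N - 2) Q(a) Q(b))`,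
and both summands are positive as soon as `Q(a), Q(b) > 0`, i.e. on the whole range `p > 2/(N - 2)`
where `q(p)` is defined. For `N = 6` one computes `σ₁(3/2) = 71/40`.
-/

/-- σ₁(p) = pN - N(q+1)/(N-2) - N/(q+1), where q = q(p) is determined by the
criticality relation N/(q+1) = N - 2 - N/(p+1), i.e. q+1 = N/(N - 2 - N/(p+1)). -/
noncomputable def sigma1 (N p : ℝ) : ℝ :=
  p * N - N * (N / (N - 2 - N / (p + 1))) / (N - 2) - (N - 2 - N / (p + 1))

lemma sub_two_sub_div_add_one {n x : ℝ} (hx : x + 1 ≠ 0) :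
    n - 2 - n / (x + 1) = ((n - 2) * x - 2) / (x + 1) := by
  field_simp
  ring

lemma sigma1_sub_sigma1 {n a b : ℝ} (hn : n - 2 ≠ 0) (ha : a + 1 ≠ 0) (hb : b + 1 ≠ 0)
    (hqa : (n - 2) * a - 2 ≠ 0) (hqb : (n - 2) * b - 2 ≠ 0) :
    sigma1 n b - sigma1 n a = (b - a) * (n - n / ((a + 1) * (b + 1)) +
      n ^ 3 / ((n - 2) * ((n - 2) * a - 2) * ((n - 2) * b - 2))) := by
  rw [sigma1, sigma1, sub_two_sub_div_add_one ha, sub_two_sub_div_add_one hb]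
  -- `field_simp` would otherwise reorder `(n - 2) * b` and lose track of `hqb`
  generalize hQa : (n - 2) * a - 2 = Qa at *
  generalize hQb : (n - 2) * b - 2 = Qb at *
  field_simp
  rw [← hQa, ← hQb]
  ring

theorem strictMonoOn_sigma1 {n : ℝ} (hn : 2 < n) :
    StrictMonoOn (sigma1 n) (Set.Ioi (2 / (n - 2))) := by
  have hn2 : 0 < n - 2 := by linarith
  have hQ {x : ℝ} (hx : 2 / (n - 2) < x) : 0 < (n - 2) * x - 2 := by
    rw [div_lt_iff₀' hn2] at hx
    linarith
  have hpos {x : ℝ} (hx : 2 / (n - 2) < x) : 0 < x := lt_trans (by positivity) hx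
  intro a ha b hb hab
  have ha0 := hpos ha
  have hb0 := hpos hb
  have hQa := hQ ha
  have hQb := hQ hb
  rw [← sub_pos, sigma1_sub_sigma1 hn2.ne' (by positivity) (by positivity) hQa.ne' hQb.ne']
  have hfirst : n / ((a + 1) * (b + 1)) < n := div_lt_self (by linarith) (by nlinarith)
  have hsecond : 0 < n ^ 3 / ((n - 2) * ((n - 2) * a - 2) * ((n - 2) * b - 2)) := by positivity
  exact mul_pos (sub_pos.2 hab) (by linarith)

theorem stmt_11 (N : ℕ) (hN : 6 ≤ N) :
    StrictMonoOn (sigma1 N) (Set.Icc ((N : ℝ) / (N - 2)) (((N : ℝ) + 2) / (N - 2))) ∧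
    (N = 6 → 0 < sigma1 6 (3 / 2) ∧ ∀ p ∈ Set.Ioc (3 / 2 : ℝ) 2, 0 < sigma1 6 p) := by
  have hN2 : (2 : ℝ) < N := by exact_mod_cast (by omega : 2 < N)
  have hsub : Set.Icc ((N : ℝ) / (N - 2)) (((N : ℝ) + 2) / (N - 2)) ⊆ Set.Ioi (2 / (N - 2)) :=
    fun p hp ↦ lt_of_lt_of_le (div_lt_div_of_pos_right hN2 (by linarith)) hp.1
  refine ⟨(strictMonoOn_sigma1 hN2).mono hsub, ?_⟩
  rintro rfl
  have hval : 0 < sigma1 6 (3 / 2) := by norm_num [sigma1]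
  refine ⟨hval, fun p hp ↦ hval.trans ?_⟩
  exact strictMonoOn_sigma1 (by norm_num) (by norm_num) (by norm_num; linarith [hp.1]) hp.1
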